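/- Let V be a real M×N matrix of full column rank N, G(w) := Vᵀ·diag(w)·V, and E(w) := −(1/N)·log(det G(w)) + Σᵢ wᵢ. For every w ∈ ℝ^M with wᵢ ≥ 0 for all i and G(w) positive definite, and for every u ∈ ℝ^M, one has uᵀ·Hess E(w)·u = 0 if and only if Vᵀ·diag(u)·V = 0 (the zero N×N matrix), i.e., if and only if Σᵢ uᵢ·Vᵢₕ·Vᵢₖ = 0 for all h, k ∈ {1, ..., N}. -/

import Mathlib

/-!
By Jacobi's formula the first directional derivative of `E` at `v` is
`-(1/N) tr(G(v)⁻¹ G(u)) + Σ uᵢ`; differentiating the inverse once more gives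
`uᵀ Hess E(w) u = (1/N) tr(G(w)⁻¹ G(u) G(w)⁻¹ G(u))`. Writing `G(w)⁻¹ = Yᴴ Y` with `Y`
invertible, this trace is the squared Frobenius norm of `Y G(u) Yᴴ`, so it vanishes
exactly when `G(u) = 0`.
-/

open Matrix Filter Topology

open scoped Matrix.Norms.Operator

namespace Matrix

variable {n : Type*} [Fintype n] [DecidableEq n]

theorem sum_det_updateRow_eq_trace_adjugate_mul {R : Type*} [CommRing R] (A B : Matrix n n R) :
    ∑ i, (A.updateRow i (B i)).det = trace (adjugate A * B) := by
  calc ∑ i, (A.updateRow i (B i)).det = ∑ i, ∑ j, adjugate A j i * B i j := by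
        refine Finset.sum_congr rfl fun i _ => ?_
        rw [← cramer_transpose_apply, cramer_eq_adjugate_mulVec, ← adjugate_transpose]
        simp [mulVec, dotProduct]
    _ = trace (adjugate A * B) := by
        simp only [trace, diag, mul_apply]
        exact Finset.sum_comm

variable {𝕜 : Type*} [NontriviallyNormedField 𝕜]

noncomputable def detRowContinuousAlternatingMap : (n → 𝕜) [⋀^n]→L[𝕜] 𝕜 :=
  { detRowAlternating with cont := continuous_id.matrix_det }

variable [CompleteSpace 𝕜]

noncomputable def traceMulLeft (A : Matrix n n 𝕜) : Matrix n n 𝕜 →L[𝕜] 𝕜 :=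
  LinearMap.toContinuousLinearMap ((traceLinearMap n 𝕜 𝕜).comp (LinearMap.mulLeft 𝕜 A))

@[simp]
theorem traceMulLeft_apply (A B : Matrix n n 𝕜) : traceMulLeft A B = trace (A * B) := rfl

theorem hasFDerivAt_det (A : Matrix n n 𝕜) : HasFDerivAt det (traceMulLeft (adjugate A)) A := by
  let rows : Matrix n n 𝕜 →L[𝕜] (n → n → 𝕜) :=
    LinearMap.toContinuousLinearMap (ofLinearEquiv 𝕜).symm.toLinearMap
  refine ((detRowContinuousAlternatingMap.hasFDerivAt (rows A)).comp A
    rows.hasFDerivAt).congr_fderiv ?_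
  ext B
  -- `rw` cannot see through the two (defeq) topologies on `Matrix`; `change` can.
  change _ = trace (adjugate A * B)
  rw [← sum_det_updateRow_eq_trace_adjugate_mul]
  exact ContinuousMultilinearMap.linearDeriv_apply _ _ _

theorem hasFDerivAt_log_det {A : Matrix n n ℝ} (hA : A.det ≠ 0) :
    HasFDerivAt (fun X : Matrix n n ℝ => Real.log X.det) (traceMulLeft A⁻¹) A := by
  refine ((Real.hasDerivAt_log hA).comp_hasFDerivAt A (hasFDerivAt_det A)).congr_fderiv ?_
  ext B
  change A.det⁻¹ * trace (adjugate A * B) = trace (A⁻¹ * B)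
  rw [inv_def, Ring.inverse_eq_inv', smul_mul, trace_smul, smul_eq_mul]

theorem hasFDerivAt_inv {𝕜 : Type*} [RCLike 𝕜] {A : Matrix n n 𝕜} (hA : IsUnit A.det) :
    HasFDerivAt (fun X : Matrix n n 𝕜 => X⁻¹)
      (-ContinuousLinearMap.mulLeftRight 𝕜 _ A⁻¹ A⁻¹) A := by
  have hu : IsUnit A := (isUnit_iff_isUnit_det A).2 hA
  have h := hasFDerivAt_ringInverse (𝕜 := 𝕜) hu.unit
  rw [coe_units_inv, hu.unit_spec] at h
  rwa [show (fun X : Matrix n n 𝕜 => X⁻¹) = Ring.inverse from funext nonsing_inv_eq_ringInverse]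

open scoped MatrixOrder ComplexOrder in
theorem PosDef.trace_inv_mul_mul_inv_mul_eq_zero_iff {𝕜 : Type*} [RCLike 𝕜] {A B : Matrix n n 𝕜}
    (hA : A.PosDef) (hB : B.IsHermitian) : trace (A⁻¹ * B * A⁻¹ * B) = 0 ↔ B = 0 := by
  obtain ⟨y, hy, hAy⟩ := CStarAlgebra.isStrictlyPositive_iff_eq_star_mul_self.mp
    hA.inv.isStrictlyPositive
  have hC : trace (A⁻¹ * B * A⁻¹ * B) = trace ((y * B * yᴴ)ᴴ * (y * B * yᴴ)) := by
    rw [hAy, star_eq_conjTranspose]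
    simp only [conjTranspose_mul, conjTranspose_conjTranspose, hB.eq, ← mul_assoc]
    rw [trace_mul_cycle, trace_mul_comm]
    simp only [← mul_assoc]
  rw [hC, trace_conjTranspose_mul_self_eq_zero_iff,
    IsUnit.mul_left_eq_zero ((isUnit_conjTranspose y).mpr hy), IsUnit.mul_right_eq_zero hy]

end Matrix

section DesignEnergy

variable {m n : Type*} [Fintype m] [DecidableEq m]

noncomputable def weightedGram {𝕜 : Type*} [NontriviallyNormedField 𝕜] [CompleteSpace 𝕜]
    (V : Matrix m n 𝕜) : (m → 𝕜) →L[𝕜] Matrix n n 𝕜 :=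
  LinearMap.toContinuousLinearMap
    { toFun := fun w => Vᵀ * diagonal w * V
      map_add' := fun a b => by
        rw [show diagonal (a + b) = diagonal a + diagonal b from (diagonal_add a b).symm,
          Matrix.mul_add, Matrix.add_mul]
      map_smul' := fun c a => by rw [diagonal_smul, Matrix.mul_smul, Matrix.smul_mul]; rfl }

@[simp]
theorem weightedGram_apply {𝕜 : Type*} [NontriviallyNormedField 𝕜] [CompleteSpace 𝕜]
    (V : Matrix m n 𝕜) (w : m → 𝕜) : weightedGram V w = Vᵀ * diagonal w * V := rfl

theorem isHermitian_weightedGram (V : Matrix m n ℝ) (w : m → ℝ) :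
    (weightedGram V w).IsHermitian := by
  simpa [conjTranspose_eq_transpose_of_trivial] using
    isHermitian_conjTranspose_mul_mul V (isHermitian_diagonal w)

variable [Fintype n] [DecidableEq n]

noncomputable def designEnergy (V : Matrix m n ℝ) (c : ℝ) (v : m → ℝ) : ℝ :=
  c * Real.log (weightedGram V v).det + ∑ i, v i

variable (V : Matrix m n ℝ) (c : ℝ)

theorem fderiv_designEnergy_apply {v : m → ℝ} (hv : (weightedGram V v).det ≠ 0) (u : m → ℝ) :
    fderiv ℝ (designEnergy V c) v u =
      c * trace ((weightedGram V v)⁻¹ * weightedGram V u) + ∑ i, u i := by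
  have hsum : HasFDerivAt (fun v : m → ℝ => ∑ i, v i) (∑ i, ContinuousLinearMap.proj i) v :=
    HasFDerivAt.fun_sum fun i _ => hasFDerivAt_apply (𝕜 := ℝ) i v
  have h : HasFDerivAt (designEnergy V c) _ v :=
    (((hasFDerivAt_log_det hv).comp v (weightedGram V).hasFDerivAt).const_mul c).add hsum
  rw [h.fderiv]
  simp only [_root_.add_apply, FunLike.coe_smul, Pi.smul_apply, FunLike.coe_sum, Finset.sum_apply,
    ContinuousLinearMap.proj_apply, smul_eq_mul]
  rfl

theorem fderiv_fderiv_designEnergy_apply {w : m → ℝ} (hw : (weightedGram V w).det ≠ 0)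
    (u : m → ℝ) :
    fderiv ℝ (fun v => fderiv ℝ (designEnergy V c) v u) w u =
      -c * trace ((weightedGram V w)⁻¹ * weightedGram V u * (weightedGram V w)⁻¹ *
        weightedGram V u) := by
  have hnear : ∀ᶠ v in 𝓝 w, (weightedGram V v).det ≠ 0 :=
    ((hasFDerivAt_det _).comp w (weightedGram V).hasFDerivAt).continuousAt.eventually_ne hw
  have heq : (fun v => fderiv ℝ (designEnergy V c) v u)
      =ᶠ[𝓝 w] fun v => c * traceMulLeft (weightedGram V u) (weightedGram V v)⁻¹ + ∑ i, u i := by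
    filter_upwards [hnear] with v hv
    rw [fderiv_designEnergy_apply V c hv, traceMulLeft_apply, trace_mul_comm]
  have h : HasFDerivAt
      (fun v => c * traceMulLeft (weightedGram V u) (weightedGram V v)⁻¹ + ∑ i, u i) _ w :=
    (((traceMulLeft (weightedGram V u)).hasFDerivAt.comp w
      ((hasFDerivAt_inv (isUnit_iff_ne_zero.mpr hw)).comp w
        (weightedGram V).hasFDerivAt)).const_mul c).add_const (∑ i, u i)
  rw [heq.fderiv_eq, h.fderiv]
  change c * trace (weightedGram V u *
    -((weightedGram V w)⁻¹ * weightedGram V u * (weightedGram V w)⁻¹)) = _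
  rw [mul_neg, trace_neg, trace_mul_comm, neg_mul, mul_neg]

end DesignEnergy

theorem stmt_7_general (M N : ℕ) (hN : 0 < N)
    (V : Matrix (Fin M) (Fin N) ℝ)
    (G : (Fin M → ℝ) → Matrix (Fin N) (Fin N) ℝ)
    (hG : ∀ w, G w = Vᵀ * diagonal w * V)
    (E : (Fin M → ℝ) → ℝ)
    (hE : ∀ w, E w = -(1 / (N : ℝ)) * Real.log (G w).det + ∑ i, w i)
    (w : Fin M → ℝ) (hw : (G w).PosDef)
    (u : Fin M → ℝ) :
    fderiv ℝ (fun v => fderiv ℝ E v u) w u = 0 ↔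
      Vᵀ * diagonal u * V = 0 := by
  obtain rfl : G = weightedGram V := funext hG
  obtain rfl : E = designEnergy V (-(1 / (N : ℝ))) := funext hE
  have hc : -(-(1 / (N : ℝ))) ≠ 0 := by simp [hN.ne']
  rw [fderiv_fderiv_designEnergy_apply V _ hw.det_pos.ne', mul_eq_zero, or_iff_right hc,
    hw.trace_inv_mul_mul_inv_mul_eq_zero_iff (isHermitian_weightedGram V u), weightedGram_apply]

theorem stmt_7 (M N : ℕ) (hN : 0 < N) (hMN : N ≤ M)
    (V : Matrix (Fin M) (Fin N) ℝ) (hV : V.rank = N)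
    (G : (Fin M → ℝ) → Matrix (Fin N) (Fin N) ℝ)
    (hG : ∀ w, G w = Vᵀ * diagonal w * V)
    (E : (Fin M → ℝ) → ℝ)
    (hE : ∀ w, E w = -(1 / (N : ℝ)) * Real.log (G w).det + ∑ i, w i)
    (w : Fin M → ℝ) (hwpos : ∀ i, 0 ≤ w i) (hw : (G w).PosDef)
    (u : Fin M → ℝ) :
    fderiv ℝ (fun v => fderiv ℝ E v u) w u = 0 ↔
      Vᵀ * diagonal u * V = 0 :=
  stmt_7_general M N hN V G hG E hE w hw u
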